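/- Let (D, IC) be a database and suppose (Insert, Retract) is a ≤_i-preferred repair of (D, IC). Then there is a ≤_i-maximally consistent element N of M^DB = { N | N ≥_k H^D ⊕ M for some two-valued model M of IC } such that Insert = Insert^N = N^⊤ \ D and Retract = Retract^N = N^⊤ ∩ D. -/
import Mathlib


/-- Propositional formulas built from atoms using negation, conjunction and disjunction. -/
inductive Fmla (α : Type) : Type where
  | atom : α → Fmla α
  | neg  : Fmla α → Fmla α
  | conj : Fmla α → Fmla α → Fmla α
  | disj : Fmla α → Fmla α → Fmla α

/-- Two-valued satisfaction; a two-valued valuation is identified with its set of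
true atoms `M` (so `M^t = M`, and the minimal Herbrand model `H^D` is `D` itself). -/
def sat2 {α : Type} (M : Set α) : Fmla α → Prop
  | .atom p => p ∈ M
  | .neg φ => ¬ sat2 M φ
  | .conj φ ψ => sat2 M φ ∧ sat2 M ψ
  | .disj φ ψ => sat2 M φ ∨ sat2 M ψ

/-- `M` is a two-valued model of the set of formulas `T`. -/
def models2 {α : Type} (M : Set α) (T : Set (Fmla α)) : Prop := ∀ φ ∈ T, sat2 M φ

/-- `(D, IC)` is a database: `IC` is a finite, classically consistent set of formulas. -/
def IsDatabase {α : Type} (_D : Set α) (IC : Set (Fmla α)) : Prop :=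
  IC.Finite ∧ ∃ M : Set α, models2 M IC

/-- The database `(D, IC)` is consistent: every formula of `IC` follows from `D`,
i.e. is satisfied by the minimal Herbrand model of `D`. -/
def IsConsistentDB {α : Type} (D : Set α) (IC : Set (Fmla α)) : Prop := models2 D IC

/-- `(I, R)` is a repair of the database `(D, IC)`. -/
def IsRepair {α : Type} (D : Set α) (IC : Set (Fmla α)) (I R : Set α) : Prop :=
  I ∩ D = ∅ ∧ R ⊆ D ∧ IsConsistentDB ((D ∪ I) \ R) IC

/-- The three-valued structure THREE = {t, f, ⊤}. -/
inductive Three : Type where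
  | tt | ff | top
  deriving DecidableEq

namespace Three

/-- Position in the truth order `f ≤_t ⊤ ≤_t t`. -/
def rank : Three → ℕ
  | ff => 0 | top => 1 | tt => 2

/-- Conjunction: meet w.r.t. the truth order. -/
def and3 (a b : Three) : Three := if rank a ≤ rank b then a else b

/-- Disjunction: join w.r.t. the truth order. -/
def or3 (a b : Three) : Three := if rank a ≤ rank b then b else a

/-- Negation: swaps `t` and `f`, fixes `⊤`. -/
def neg3 : Three → Three | tt => ff | ff => tt | top => top

/-- `x ⊕ y`: the least upper bound w.r.t. the knowledge order. -/
def oplus (a b : Three) : Three := if a = b then a else top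

/-- The knowledge order `≤_k`: `f` and `t` incomparable, both below `⊤`. -/
def kle (a b : Three) : Prop := a = b ∨ b = top

/-- The designated truth values are `t` and `⊤`. -/
def designated (a : Three) : Prop := a ≠ ff

end Three

/-- Three-valued evaluation of formulas. -/
def eval3 {α : Type} (ν : α → Three) : Fmla α → Three
  | .atom p => ν p
  | .neg φ => Three.neg3 (eval3 ν φ)
  | .conj φ ψ => Three.and3 (eval3 ν φ) (eval3 ν ψ)
  | .disj φ ψ => Three.or3 (eval3 ν φ) (eval3 ν ψ)

/-- `ν` is a three-valued model of the set of formulas `T`. -/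
def models3 {α : Type} (ν : α → Three) (T : Set (Fmla α)) : Prop :=
  ∀ φ ∈ T, Three.designated (eval3 ν φ)

open Classical in
/-- The two-valued valuation with true-set `M`, viewed inside THREE. -/
noncomputable def toThree {α : Type} (M : Set α) (p : α) : Three :=
  if p ∈ M then Three.tt else Three.ff

/-- `ν^⊤`: the atoms assigned `⊤` by `ν`. -/
def topSet {α : Type} (ν : α → Three) : Set α := {p | ν p = Three.top}

/-- `ν ≥_k μ` pointwise. -/
def kge {α : Type} (ν μ : α → Three) : Prop := ∀ p, Three.kle (μ p) (ν p)

/-- The valuation `H^D ⊕ M` (pointwise `⊕`). -/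
noncomputable def herbOplus {α : Type} (D M : Set α) : α → Three :=
  fun p => Three.oplus (toThree D p) (toThree M p)

/-- `M^DB = { N | N ≥_k H^D ⊕ M for some two-valued model M of IC }`. -/
def MDB {α : Type} (D : Set α) (IC : Set (Fmla α)) : Set (α → Three) :=
  {N | ∃ M : Set α, models2 M IC ∧ kge N (herbOplus D M)}

/-- The atoms of `D`, viewed as formulas. -/
def atomsOf {α : Type} (D : Set α) : Set (Fmla α) := Fmla.atom '' D

/-- `(I, R)` is a `≤_i`-preferred repair of `(D, IC)`:
`(I', R') ≤_i (I, R)` iff `I ⊆ I'` and `R ⊆ R'`. -/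
def IsPreferredRepairI {α : Type} (D : Set α) (IC : Set (Fmla α)) (I R : Set α) : Prop :=
  IsRepair D IC I R ∧
    ∀ I' R', IsRepair D IC I' R' → (I' ⊆ I ∧ R' ⊆ R) → (I ⊆ I' ∧ R ⊆ R')

/-- `(I, R)` is a `≤_c`-preferred repair of `(D, IC)`:
`(I', R') ≤_c (I, R)` iff `|I| + |R| ≤ |I'| + |R'|`. -/
def IsPreferredRepairC {α : Type} (D : Set α) (IC : Set (Fmla α)) (I R : Set α) : Prop :=
  IsRepair D IC I R ∧
    ∀ I' R', IsRepair D IC I' R' → I'.ncard + R'.ncard ≤ I.ncard + R.ncard →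
      I.ncard + R.ncard ≤ I'.ncard + R'.ncard

/-- `N` is `≤_i`-maximally consistent in `S`: no `N' ∈ S` has `N'^⊤ ⊊ N^⊤`. -/
def MaxConsI {α : Type} (S : Set (α → Three)) (N : α → Three) : Prop :=
  N ∈ S ∧ ¬ ∃ N' ∈ S, topSet N' ⊂ topSet N

/-- `N` is `≤_c`-maximally consistent in `S`: no `N' ∈ S` has `#(N'^⊤) < #(N^⊤)`. -/
def MaxConsC {α : Type} (S : Set (α → Three)) (N : α → Three) : Prop :=
  N ∈ S ∧ ¬ ∃ N' ∈ S, (topSet N').ncard < (topSet N).ncard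

lemma topSet_herbOplus {α : Type} (D M : Set α) :
    topSet (herbOplus D M) = (D \ M) ∪ (M \ D) := by
  ext p
  simp only [topSet, herbOplus, toThree, Three.oplus, Set.mem_setOf_eq,
    Set.mem_union, Set.mem_diff]
  by_cases hD : p ∈ D <;> by_cases hM : p ∈ M <;> simp [hD, hM]

lemma mem_MDB_self {α : Type} (D : Set α) (IC : Set (Fmla α)) (M : Set α)
    (hM : models2 M IC) : herbOplus D M ∈ MDB D IC :=
  ⟨M, hM, fun p => Or.inl rfl⟩

lemma topSet_subset_of_kge {α : Type} {N μ : α → Three} (h : kge N μ) :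
    topSet μ ⊆ topSet N := by
  intro p hp
  rcases h p with h' | h'
  · simpa [topSet, ← h'] using hp
  · exact h'

/-- Proposition 6: every `≤_i`-preferred repair of `(D, IC)` arises
from a `≤_i`-maximally consistent element `N` of `M^DB` as `(N^⊤ \ D, N^⊤ ∩ D)`. -/
theorem maxConsI_of_preferredI {α : Type} (D : Set α) (IC : Set (Fmla α))
    (hDB : IsDatabase D IC) (I R : Set α) (h : IsPreferredRepairI D IC I R) :
    ∃ N : α → Three, MaxConsI (MDB D IC) N ∧ I = topSet N \ D ∧ R = topSet N ∩ D := by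
  obtain ⟨hrep, hpref⟩ := h
  obtain ⟨hID, hRD, hcons⟩ := hrep
  set M : Set α := (D ∪ I) \ R with hMdef
  have hInD : ∀ p ∈ I, p ∉ D := fun p hpI hpD =>
    (Set.eq_empty_iff_forall_notMem.mp hID p) ⟨hpI, hpD⟩
  have hts : topSet (herbOplus D M) = I ∪ R := by
    rw [topSet_herbOplus]
    ext p
    simp only [Set.mem_union, Set.mem_diff, hMdef]
    constructor
    · rintro (⟨hpD, hpM⟩ | ⟨hpM, hpD⟩)
      · right
        by_contra hpR
        exact hpM ⟨Or.inl hpD, hpR⟩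
      · left
        rcases hpM.1 with h1 | h1
        · exact absurd h1 hpD
        · exact h1
    · rintro (hpI | hpR)
      · have hpD := hInD p hpI
        have hpR : p ∉ R := fun hpR => hpD (hRD hpR)
        exact Or.inr ⟨⟨Or.inr hpI, hpR⟩, hpD⟩
      · exact Or.inl ⟨hRD hpR, fun h => h.2 hpR⟩
  refine ⟨herbOplus D M, ⟨mem_MDB_self D IC M hcons, ?_⟩, ?_, ?_⟩
  · -- maximality
    rintro ⟨N', ⟨M', hM', hk⟩, hsub⟩
    set I' : Set α := M' \ D with hI'def
    set R' : Set α := D \ M' with hR'def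
    have hM'eq : (D ∪ I') \ R' = M' := by
      ext p
      simp only [hI'def, hR'def, Set.mem_diff, Set.mem_union]
      by_cases hpM' : p ∈ M' <;> by_cases hpD : p ∈ D <;> simp [hpM', hpD]
    have hrep' : IsRepair D IC I' R' := by
      refine ⟨?_, Set.diff_subset, ?_⟩
      · apply Set.eq_empty_of_subset_empty
        rintro p ⟨⟨_, h2⟩, h3⟩; exact h2 h3
      · rw [IsConsistentDB, hM'eq]; exact hM'
    have hsub2 : I' ∪ R' ⊆ topSet N' := by
      have h1 : topSet (herbOplus D M') ⊆ topSet N' := topSet_subset_of_kge hk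
      rw [topSet_herbOplus] at h1
      intro p hp
      exact h1 (hp.elim Or.inr Or.inl)
    rw [hts] at hsub
    have hI'I : I' ⊆ I := by
      intro p hp
      rcases hsub.1 (hsub2 (Or.inl hp)) with h | h
      · exact h
      · exact absurd (hRD h) hp.2
    have hR'R : R' ⊆ R := by
      intro p hp
      rcases hsub.1 (hsub2 (Or.inr hp)) with h | h
      · exact absurd hp.1 (hInD p h)
      · exact h
    obtain ⟨hII', hRR'⟩ := hpref I' R' hrep' ⟨hI'I, hR'R⟩
    have : I ∪ R ⊆ topSet N' :=
      fun p hp => hsub2 (hp.elim (fun h => Or.inl (hII' h)) (fun h => Or.inr (hRR' h)))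
    exact hsub.2 this
  · rw [hts]
    ext p
    simp only [Set.mem_diff, Set.mem_union]
    constructor
    · intro hp; exact ⟨Or.inl hp, hInD p hp⟩
    · rintro ⟨hp | hp, hpD⟩
      · exact hp
      · exact absurd (hRD hp) hpD
  · rw [hts]
    ext p
    simp only [Set.mem_inter_iff, Set.mem_union]
    constructor
    · intro hp; exact ⟨Or.inr hp, hRD hp⟩
    · rintro ⟨hp | hp, hpD⟩
      · exact absurd hpD (hInD p hp)
      · exact hp
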